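/- arXiv:1012.1425 — 5 statements merged into one kernel-verified Lean document; each statement's English description precedes it below -/
import Mathlib

section
/- If a code C has two Tanner graph representations G and G', where G' is obtained from G by merging some sets of constraint nodes (each merged node enforcing all constraints of the nodes it replaces), then the fundamental LP polytope Q'(C) of G' is contained in the fundamental polytope Q(C) of G. -/
/-- Membership of a real vector `c` in the local LP polytope of the constituent
code `C` on the index set `S`: `c` is (on `S`) a convex combination of the
codewords of `C`. -/
def inLocal {N : ℕ} (S : Finset (Fin N)) (C : Set (Fin N → Bool)) (c : Fin N → ℝ) : Prop :=
  ∃ w : (Fin N → Bool) → ℝ,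
    (∀ g, 0 ≤ w g) ∧ (∀ g, g ∉ C → w g = 0) ∧ (∑ g, w g) = 1 ∧
    ∀ i ∈ S, c i = ∑ g, (if g i = true then w g else 0)

theorem inLocal.mono {N : ℕ} {S S' : Finset (Fin N)} {C C' : Set (Fin N → Bool)}
    {c : Fin N → ℝ} (h : inLocal S C c) (hS : S' ⊆ S) (hC : C ⊆ C') : inLocal S' C' c := by
  obtain ⟨w, hw_nonneg, hw_supp, hw_sum, hw_marg⟩ := h
  exact ⟨w, hw_nonneg, fun g hg => hw_supp g (mt (@hC g) hg), hw_sum,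
    fun i hi => hw_marg i (hS hi)⟩

/-- if the Tanner graph `G'` is obtained from `G` by merging groups of
constraint nodes (described by the grouping map `m : J → J'`), with the merged
constituent code enforcing all constraints of the nodes it replaces, then the
fundamental polytope of `G'` is contained in that of `G`. -/
theorem merged_fundamental_polytope_subset
    {N : ℕ} {J J' : Type} [Fintype J] [DecidableEq J']
    (Nbr : J → Finset (Fin N)) (C : J → Set (Fin N → Bool)) (m : J → J')
    (c : Fin N → ℝ)
    (hQ' : (∀ i, 0 ≤ c i ∧ c i ≤ 1) ∧
      ∀ j' : J',
        inLocal (Finset.univ.biUnion fun j => if m j = j' then Nbr j else ∅)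
          {g | ∀ j, m j = j' → g ∈ C j} c) :
    (∀ i, 0 ≤ c i ∧ c i ≤ 1) ∧ ∀ j, inLocal (Nbr j) (C j) c := by
  refine ⟨hQ'.1, fun j => (hQ'.2 (m j)).mono ?_ fun g hg => hg j rfl⟩
  have hNbr := Finset.subset_biUnion_of_mem (fun k => if m k = m j then Nbr k else ∅)
    (Finset.mem_univ j)
  rwa [if_pos rfl] at hNbr
end

section
/- Let C_1 be a binary code on index set S_1 ∪ {k} and C_2 a binary code on {k} ∪ S_2, where S_1, S_2, {k} are pairwise disjoint, and let C' = {(ĝ_1, b, ĝ_2) : (ĝ_1, b) ∈ C_1, (b, ĝ_2) ∈ C_2} be the code obtained by gluing along the shared coordinate k. If c is a vector with 0 < c_k < 1 that lies in the convex hulls of both C_1 (on S_1 ∪ {k}) and C_2 (on {k} ∪ S_2), then the restriction of c to S_1 ∪ {k} ∪ S_2 lies in the convex hull of C'. -/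
open Finset

section Coupling

variable {α β κ : Type*} [Fintype α] [DecidableEq κ]

noncomputable def fiberMass (f : α → κ) (μ : α → ℝ) (t : κ) : ℝ :=
  ∑ a, if f a = t then μ a else 0

lemma fiberMass_nonneg {f : α → κ} {μ : α → ℝ} (hμ : ∀ a, 0 ≤ μ a) (t : κ) :
    0 ≤ fiberMass f μ t :=
  sum_nonneg fun a _ => ite_nonneg (hμ a) le_rfl

lemma eq_zero_of_fiberMass_eq_zero {f : α → κ} {μ : α → ℝ} (hμ : ∀ a, 0 ≤ μ a) {a : α}
    (h : fiberMass f μ (f a) = 0) : μ a = 0 := by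
  have := (sum_eq_zero_iff_of_nonneg fun b _ => ?_).1 h a (mem_univ a)
  · simpa using this
  · exact ite_nonneg (hμ b) le_rfl

lemma fiberMass_true_add_false (f : α → Bool) (μ : α → ℝ) :
    fiberMass f μ true + fiberMass f μ false = ∑ a, μ a := by
  rw [fiberMass, fiberMass, ← sum_add_distrib]
  exact sum_congr rfl fun a _ => by cases f a <;> simp

lemma fiberMass_eq_of_true [Fintype β] {f : α → Bool} {g : β → Bool} {μ : α → ℝ} {ν : β → ℝ}
    (hsum : ∑ a, μ a = ∑ b, ν b) (htrue : fiberMass f μ true = fiberMass g ν true) :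
    ∀ t, fiberMass f μ t = fiberMass g ν t
  | true => htrue
  | false => by
    have := fiberMass_true_add_false f μ
    have := fiberMass_true_add_false g ν
    linarith

/-- On a key of mass zero the formula divides by zero; `x / 0 = 0` then gives the right value,
since such a key carries no weight. -/
noncomputable def condIndepCoupling (f : α → κ) (g : β → κ) (μ : α → ℝ) (ν : β → ℝ)
    (p : α × β) : ℝ :=
  if f p.1 = g p.2 then μ p.1 * ν p.2 / fiberMass f μ (f p.1) else 0

variable {f : α → κ} {g : β → κ} {μ : α → ℝ} {ν : β → ℝ}

lemma condIndepCoupling_nonneg (hμ : ∀ a, 0 ≤ μ a) (hν : ∀ b, 0 ≤ ν b) (p : α × β) :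
    0 ≤ condIndepCoupling f g μ ν p := by
  unfold condIndepCoupling
  split_ifs
  · exact div_nonneg (mul_nonneg (hμ _) (hν _)) (fiberMass_nonneg hμ _)
  · exact le_rfl

lemma condIndepCoupling_ne_zero {p : α × β} (hp : condIndepCoupling f g μ ν p ≠ 0) :
    f p.1 = g p.2 ∧ μ p.1 ≠ 0 ∧ ν p.2 ≠ 0 := by
  unfold condIndepCoupling at hp
  split_ifs at hp with hfg
  · exact ⟨hfg, fun h => hp (by simp [h]), fun h => hp (by simp [h])⟩
  · exact absurd rfl hp

variable [Fintype β]

lemma condIndepCoupling_swap (hfib : ∀ t, fiberMass f μ t = fiberMass g ν t) (a : α) (b : β) :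
    condIndepCoupling f g μ ν (a, b) = condIndepCoupling g f ν μ (b, a) := by
  unfold condIndepCoupling
  split_ifs with h h' h'
  · rw [mul_comm, h, hfib]
  · exact absurd h.symm h'
  · exact absurd h'.symm h
  · rfl

lemma sum_condIndepCoupling_right (hfib : ∀ t, fiberMass f μ t = fiberMass g ν t)
    (hμ : ∀ a, 0 ≤ μ a) (a : α) :
    ∑ b, condIndepCoupling f g μ ν (a, b) = μ a := by
  have hterm : ∀ b, condIndepCoupling f g μ ν (a, b)
      = μ a / fiberMass f μ (f a) * (if g b = f a then ν b else 0) := by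
    intro b
    unfold condIndepCoupling
    split_ifs with h h' h' <;> first | exact absurd h.symm h' | exact absurd h'.symm h | ring
  rw [sum_congr rfl fun b _ => hterm b, ← mul_sum, ← fiberMass, ← hfib]
  exact div_mul_cancel_of_imp (eq_zero_of_fiberMass_eq_zero hμ)

lemma sum_condIndepCoupling_left (hfib : ∀ t, fiberMass f μ t = fiberMass g ν t)
    (hν : ∀ b, 0 ≤ ν b) (b : β) :
    ∑ a, condIndepCoupling f g μ ν (a, b) = ν b := by
  simp_rw [condIndepCoupling_swap hfib]
  exact sum_condIndepCoupling_right (fun t => (hfib t).symm) hν b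

end Coupling

section Marginals

variable {α β : Type*} [Fintype α] [Fintype β] {F : α × β → ℝ}

lemma sum_eq_of_sum_right {μ : α → ℝ} (hF : ∀ a, ∑ b, F (a, b) = μ a) :
    ∑ p, F p = ∑ a, μ a := by
  rw [Fintype.sum_prod_type]
  exact sum_congr rfl fun a _ => hF a

lemma sum_ite_fst_of_sum_right {μ : α → ℝ} (hF : ∀ a, ∑ b, F (a, b) = μ a)
    (P : α → Prop) [DecidablePred P] :
    ∑ p, (if P p.1 then F p else 0) = ∑ a, if P a then μ a else 0 := by
  rw [Fintype.sum_prod_type]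
  exact sum_congr rfl fun a _ => by split_ifs <;> simp [hF a]

lemma sum_ite_snd_of_sum_left {ν : β → ℝ} (hF : ∀ b, ∑ a, F (a, b) = ν b)
    (P : β → Prop) [DecidablePred P] :
    ∑ p, (if P p.2 then F p else 0) = ∑ b, if P b then ν b else 0 := by
  rw [Fintype.sum_prod_type_right]
  exact sum_congr rfl fun b _ => by split_ifs <;> simp [hF b]

end Marginals

lemma inLocal_of_map {N : ℕ} {ι : Type*} [Fintype ι] {S : Finset (Fin N)}
    {C : Set (Fin N → Bool)} {c : Fin N → ℝ} (F : ι → ℝ) (φ : ι → Fin N → Bool)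
    (hF : ∀ p, 0 ≤ F p) (hC : ∀ p, F p ≠ 0 → φ p ∈ C) (hsum : ∑ p, F p = 1)
    (hc : ∀ i ∈ S, c i = ∑ p, if φ p i = true then F p else 0) : inLocal S C c := by
  refine ⟨fun g => ∑ p with φ p = g, F p, fun g => sum_nonneg fun p _ => hF p,
    fun g hg => sum_eq_zero fun p hp => ?_, by rw [sum_fiberwise, hsum], fun i hi => ?_⟩
  · by_contra h
    exact hg ((mem_filter.1 hp).2 ▸ hC p h)
  · rw [hc i hi, ← sum_fiberwise univ φ]
    refine sum_congr rfl fun g _ => ?_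
    split_ifs with h
    · exact sum_congr rfl fun p hp => by rw [(mem_filter.1 hp).2, if_pos h]
    · exact sum_eq_zero fun p hp => by rw [(mem_filter.1 hp).2, if_neg h]

section Piecewise

variable {ι γ : Type*} [DecidableEq ι] {S1 S2 : Finset ι} {k : ι} {x y : ι → γ}

lemma piecewise_eq_left_of_disjoint (hdisj : Disjoint S1 S2) (hk : x k = y k) :
    ∀ i ∈ insert k S1, S2.piecewise y x i = x i := by
  intro i hi
  by_cases hi2 : i ∈ S2
  · obtain rfl : i = k := by
      rcases mem_insert.1 hi with h | h
      · exact h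
      · exact absurd hi2 (disjoint_left.1 hdisj h)
    rw [piecewise_eq_of_mem _ _ _ hi2, hk]
  · exact piecewise_eq_of_notMem _ _ _ hi2

lemma piecewise_eq_right (hk : x k = y k) : ∀ i ∈ insert k S2, S2.piecewise y x i = y i := by
  intro i hi
  by_cases hi2 : i ∈ S2
  · exact piecewise_eq_of_mem _ _ _ hi2
  · obtain rfl : i = k := (mem_insert.1 hi).resolve_right hi2
    rw [piecewise_eq_of_notMem _ _ _ hi2, hk]

end Piecewise

theorem glued_code_convex_hull_general
    {N : ℕ} (S1 S2 : Finset (Fin N)) (k : Fin N)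
    (hdisj : Disjoint S1 S2)
    (C1 C2 : Set (Fin N → Bool)) (c : Fin N → ℝ)
    (h1 : inLocal (insert k S1) C1 c) (h2 : inLocal (insert k S2) C2 c) :
    inLocal (insert k (S1 ∪ S2))
      {g | ∃ g1 ∈ C1, ∃ g2 ∈ C2,
        (∀ i ∈ insert k S1, g i = g1 i) ∧ (∀ i ∈ insert k S2, g i = g2 i)} c := by
  obtain ⟨w1, hw1, hC1, hsum1, hc1⟩ := h1
  obtain ⟨w2, hw2, hC2, hsum2, hc2⟩ := h2
  have hfib : ∀ t, fiberMass (· k) w1 t = fiberMass (· k) w2 t :=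
    fiberMass_eq_of_true (hsum1.trans hsum2.symm)
      ((hc1 k (mem_insert_self k S1)).symm.trans (hc2 k (mem_insert_self k S2)))
  have hF1 := sum_condIndepCoupling_right hfib hw1
  have hF2 := sum_condIndepCoupling_left hfib hw2
  refine inLocal_of_map (condIndepCoupling (· k) (· k) w1 w2) (fun p => S2.piecewise p.2 p.1)
    (condIndepCoupling_nonneg hw1 hw2) (fun p hp => ?_) (by rw [sum_eq_of_sum_right hF1, hsum1])
    (fun i hi => ?_)
  · obtain ⟨hk, hp1, hp2⟩ := condIndepCoupling_ne_zero hp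
    exact ⟨p.1, not_not.1 (mt (hC1 _) hp1), p.2, not_not.1 (mt (hC2 _) hp2),
      piecewise_eq_left_of_disjoint hdisj hk, piecewise_eq_right hk⟩
  · by_cases hi2 : i ∈ S2
    · simp only [piecewise_eq_of_mem _ _ _ hi2]
      exact (hc2 i (mem_insert_of_mem hi2)).trans (sum_ite_snd_of_sum_left hF2 (· i = true)).symm
    · have hi1 : i ∈ insert k S1 := by
        simp only [mem_insert, mem_union] at hi ⊢
        tauto
      simp only [piecewise_eq_of_notMem _ _ _ hi2]
      exact (hc1 i hi1).trans (sum_ite_fst_of_sum_right hF1 (· i = true)).symm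

/-- gluing two codes along a shared coordinate `k`.  If
`0 < c k < 1` and `c` lies in the convex hull of `C₁` (on `S₁ ∪ {k}`) and of
`C₂` (on `{k} ∪ S₂`), then `c` lies on `S₁ ∪ {k} ∪ S₂` in the convex hull of
the glued code `C' = {(ĝ₁,b,ĝ₂) : (ĝ₁,b) ∈ C₁, (b,ĝ₂) ∈ C₂}`. -/
theorem glued_code_convex_hull
    {N : ℕ} (S1 S2 : Finset (Fin N)) (k : Fin N)
    (hdisj : Disjoint S1 S2) (hk1 : k ∉ S1) (hk2 : k ∉ S2)
    (C1 C2 : Set (Fin N → Bool)) (c : Fin N → ℝ)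
    (hck0 : 0 < c k) (hck1 : c k < 1)
    (h1 : inLocal (insert k S1) C1 c) (h2 : inLocal (insert k S2) C2 c) :
    inLocal (insert k (S1 ∪ S2))
      {g | ∃ g1 ∈ C1, ∃ g2 ∈ C2,
        (∀ i ∈ insert k S1, g i = g1 i) ∧ (∀ i ∈ insert k S2, g i = g2 i)} c :=
  glued_code_convex_hull_general S1 S2 k hdisj C1 C2 c h1 h2
end

section
/- The minimum of the linear functional Σ_{i∈I} γ_i c_i over the fundamental polytope Q(C) (Problem-P) equals the maximum of D(u) = Σ_{j∈J} min_{g∈C_j} Σ_{i∈N_j} u_{i,j} g_i over all u satisfying Σ_{j∈N_i} u_{i,j} = γ_i for all i (Problem-D); i.e., strong LP duality holds between Problem-P and Problem-D. -/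
/-!
Weak duality: the minimum over `C j` is at most the `w j`-average, and averaging
`∑ i ∈ Nbr j, u i j * g i` against `w j` gives `∑ i ∈ Nbr j, u i j * c i`; summing over `j` and
regrouping by variable node gives `∑ i, γ i * c i`.

Strong duality: the primal minimum `p` exists since, once weights outside the codes are dropped,
the fundamental polytope is compact. With unknowns `m j` bounding the `j`-th minimum from below,
the dual constraints plus `∑ j, m j ≥ p` form a finite linear system. By Farkas' lemma it is
either solvable, giving a dual point of value at least `p`, or it has a nonnegative certificate
which, divided by its weight on `∑ j, m j ≥ p`, is a primal point of value below `p` (a zero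
weight is impossible). Farkas' lemma is the separation theorem for the cone spanned by the rows,
which is closed: by Carathéodory's argument every conical combination can be rewritten over
linearly independent generators, on which the combination map is a closed embedding.
-/

open Finset Matrix

section Caratheodory

variable {K E : Type*} [AddCommGroup E] [Module ℝ E]

theorem exists_nonneg_coeffs_on_erase [DecidableEq K] (v : K → E) {s : Finset K} {c g : K → ℝ}
    (hc : ∀ k ∈ s, 0 ≤ c k) (hg : ∑ k ∈ s, g k • v k = 0) (hpos : ∃ k ∈ s, 0 < g k) :
    ∃ k₀ ∈ s, ∃ c' : K → ℝ, (∀ k ∈ s.erase k₀, 0 ≤ c' k) ∧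
      ∑ k ∈ s.erase k₀, c' k • v k = ∑ k ∈ s, c k • v k := by
  obtain ⟨k₀, hk₀, hmin⟩ := exists_min_image (s.filter (0 < g ·)) (fun k => c k / g k)
    (by simpa [Finset.Nonempty] using hpos)
  rw [mem_filter] at hk₀
  set r := c k₀ / g k₀
  have hr : 0 ≤ r := div_nonneg (hc k₀ hk₀.1) hk₀.2.le
  refine ⟨k₀, hk₀.1, fun k => c k - r * g k, fun k hk => ?_, ?_⟩
  · have hks := mem_of_mem_erase hk
    rcases lt_or_ge 0 (g k) with hgk | hgk
    · have := hmin k (mem_filter.2 ⟨hks, hgk⟩)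
      rw [le_div_iff₀ hgk] at this
      linarith
    · nlinarith [hc k hks]
  · rw [sum_erase _ (by simp [r, div_mul_cancel₀ _ hk₀.2.ne'])]
    simp only [sub_smul, sum_sub_distrib, mul_smul, ← smul_sum, hg, smul_zero, sub_zero]

theorem exists_linearIndepOn_nonneg_coeffs (v : K → E) (s : Finset K) {c : K → ℝ}
    (hc : ∀ k ∈ s, 0 ≤ c k) :
    ∃ t ⊆ s, LinearIndepOn ℝ v (t : Set K) ∧ ∃ c' : K → ℝ, (∀ k ∈ t, 0 ≤ c' k) ∧
      ∑ k ∈ t, c' k • v k = ∑ k ∈ s, c k • v k := by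
  classical
  induction s using Finset.strongInduction generalizing c with
  | H s ih =>
  by_cases hli : LinearIndepOn ℝ v (s : Set K)
  · exact ⟨s, Subset.rfl, hli, c, hc, rfl⟩
  obtain ⟨g, hg, k, hks, hgk⟩ := not_linearIndepOn_finset_iff.1 hli
  obtain ⟨k₀, hk₀, c', hc', hsum⟩ : ∃ k₀ ∈ s, ∃ c' : K → ℝ, (∀ k ∈ s.erase k₀, 0 ≤ c' k) ∧
      ∑ k ∈ s.erase k₀, c' k • v k = ∑ k ∈ s, c k • v k := by
    rcases hgk.lt_or_gt with hneg | hpos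
    · exact exists_nonneg_coeffs_on_erase v hc (g := -g) (by simp [neg_smul, hg])
        ⟨k, hks, by simpa⟩
    · exact exists_nonneg_coeffs_on_erase v hc hg ⟨k, hks, hpos⟩
  obtain ⟨t, hts, htli, c'', hc'', hsum'⟩ := ih _ (erase_ssubset hk₀) hc'
  exact ⟨t, hts.trans (erase_subset _ _), htli, c'', hc'', hsum'.trans hsum⟩

end Caratheodory

section FinitelyGeneratedCone

variable {K E : Type*} [Fintype K] [AddCommGroup E] [Module ℝ E]

theorem mem_hull_range_iff (v : K → E) {x : E} :
    x ∈ PointedCone.hull ℝ (Set.range v) ↔ ∃ c : K → ℝ, 0 ≤ c ∧ ∑ k, c k • v k = x := by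
  rw [PointedCone.hull, Submodule.mem_span_range_iff_exists_fun]
  constructor
  · rintro ⟨c, rfl⟩
    exact ⟨fun k => c k, fun k => (c k).2, rfl⟩
  · rintro ⟨c, hc, rfl⟩
    exact ⟨fun k => ⟨c k, hc k⟩, rfl⟩

theorem isClosed_hull_range [TopologicalSpace E] [IsTopologicalAddGroup E] [ContinuousSMul ℝ E]
    [T2Space E] (v : K → E) : IsClosed (PointedCone.hull ℝ (Set.range v) : Set E) := by
  classical
  have hunion : (PointedCone.hull ℝ (Set.range v) : Set E) =
      ⋃ (t : Finset K) (_ : LinearIndepOn ℝ v (t : Set K)),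
        Fintype.linearCombination ℝ (fun k : (t : Set K) => v k) '' Set.Ici 0 := by
    ext x
    simp only [SetLike.mem_coe, mem_hull_range_iff, Set.mem_iUnion, Set.mem_image,
      Fintype.linearCombination_apply]
    constructor
    · rintro ⟨c, hc, rfl⟩
      obtain ⟨t, -, htli, c', hc', hsum⟩ :=
        exists_linearIndepOn_nonneg_coeffs v univ fun k _ => hc k
      exact ⟨t, htli, fun k => c' k, fun k => hc' k k.2, by rw [← hsum, ← sum_coe_sort t]; rfl⟩
    · rintro ⟨t, -, c, hc, rfl⟩
      refine ⟨fun k => if hk : k ∈ t then c ⟨k, hk⟩ else 0, fun k => ?_, ?_⟩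
      · dsimp only
        split_ifs
        exacts [hc _, le_rfl]
      · rw [← sum_subset (subset_univ t) fun k _ hk => by simp [hk], ← sum_coe_sort t]
        exact sum_congr rfl fun k _ => by simp [k.2]
  rw [hunion]
  refine isClosed_iUnion_of_finite fun t => isClosed_iUnion_of_finite fun htli => ?_
  refine (LinearMap.isClosedEmbedding_of_injective ?_).isClosedMap _ isClosed_Ici
  exact LinearMap.ker_eq_bot.2 (linearIndependent_iff_injective_fintypeLinearCombination.1 htli)

end FinitelyGeneratedCone

namespace Matrix

variable {K L T : Type*} [Fintype K] [Fintype L] [Fintype T]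

theorem farkas (A : Matrix K T ℝ) (b : T → ℝ) :
    (∃ z, 0 ≤ z ∧ z ᵥ* A = b) ∨ ∃ y, 0 ≤ A *ᵥ y ∧ b ⬝ᵥ y < 0 := by
  classical
  by_cases hb : b ∈ PointedCone.hull ℝ (Set.range A)
  · obtain ⟨z, hz, hzb⟩ := (mem_hull_range_iff A).1 hb
    exact .inl ⟨z, hz, by rw [vecMul_eq_sum, ← hzb]⟩
  obtain ⟨f, hf, hfb⟩ := ProperCone.hyperplane_separation_point
    ⟨PointedCone.hull ℝ (Set.range A), isClosed_hull_range A⟩ hb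
  have hdot (x : T → ℝ) : f x = x ⬝ᵥ fun t => f (Pi.single t 1) := by
    conv_lhs => rw [pi_eq_sum_univ' x, map_sum]
    simp [dotProduct]
  refine .inr ⟨fun t => f (Pi.single t 1), fun k => ?_, by rwa [← hdot]⟩
  rw [Pi.zero_apply, mulVec, ← hdot]
  exact hf _ (PointedCone.subset_hull ⟨k, rfl⟩)

theorem farkas_le (A : Matrix K T ℝ) (β : K → ℝ) :
    (∃ y, β ≤ A *ᵥ y) ∨ ∃ z, 0 ≤ z ∧ z ᵥ* A = 0 ∧ 0 < z ⬝ᵥ β := by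
  -- homogenise: the extra coordinate `s ≥ 0` scales the right-hand side, `A y ≥ s β`
  rcases farkas (fromBlocks A (replicateCol Unit (-β)) 0 (1 : Matrix Unit Unit ℝ))
      (Sum.elim 0 fun _ => -1) with ⟨z, hz, hzb⟩ | ⟨y, hy, hyb⟩
  · refine .inr ⟨z ∘ Sum.inl, fun k => hz _, ?_, ?_⟩
    · simpa [vecMul_fromBlocks] using congr_arg (· ∘ Sum.inl) hzb
    · have hlast : -(z ∘ Sum.inl ⬝ᵥ β) + z (.inr ()) = -1 := by
        simpa [vecMul, dotProduct] using congr_fun hzb (.inr ())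
      have : 0 ≤ z (.inr ()) := hz _
      linarith
  · have hs : 0 < y (.inr ()) := by simpa [dotProduct] using hyb
    refine .inl ⟨(y (.inr ()))⁻¹ • (y ∘ Sum.inl), fun k => ?_⟩
    have hk : β k * y (.inr ()) ≤ (A *ᵥ (y ∘ Sum.inl)) k := by
      simpa [mulVec, dotProduct] using hy (.inl k)
    rw [mulVec_smul, Pi.smul_apply, smul_eq_mul, le_inv_mul_iff₀ hs]
    linarith

theorem farkas_le_eq (A : Matrix K T ℝ) (β : K → ℝ) (B : Matrix L T ℝ) (δ : L → ℝ) :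
    (∃ y, β ≤ A *ᵥ y ∧ B *ᵥ y = δ) ∨
      ∃ z x, 0 ≤ z ∧ z ᵥ* A + x ᵥ* B = 0 ∧ 0 < z ⬝ᵥ β + x ⬝ᵥ δ := by
  rcases farkas_le (fromRows A (fromRows B (-B))) (Sum.elim β (Sum.elim δ (-δ)))
    with ⟨y, hy⟩ | ⟨z, hz, hzA, hzβ⟩
  · refine .inl ⟨y, fun k => hy (.inl k), funext fun l => le_antisymm ?_ (hy (.inr (.inl l)))⟩
    simpa [neg_mulVec] using hy (.inr (.inr l))
  · refine .inr ⟨z ∘ Sum.inl, z ∘ Sum.inr ∘ Sum.inl - z ∘ Sum.inr ∘ Sum.inr, fun k => hz _, ?_, ?_⟩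
    · rw [sub_vecMul, ← hzA, vecMul_fromRows, vecMul_fromRows, vecMul_neg, sub_eq_add_neg]
      rfl
    · rw [← Sum.elim_comp_inl_inr z, sumElim_dotProduct_sumElim,
        ← Sum.elim_comp_inl_inr (z ∘ Sum.inr), sumElim_dotProduct_sumElim, dotProduct_neg] at hzβ
      rwa [sub_dotProduct, sub_eq_add_neg]

end Matrix

theorem Finset.inf'_le_sum_mul {ι : Type*} {s : Finset ι} (hs : s.Nonempty) (f : ι → ℝ)
    {w : ι → ℝ} (hw : ∀ i ∈ s, 0 ≤ w i) (hw1 : ∑ i ∈ s, w i = 1) :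
    s.inf' hs f ≤ ∑ i ∈ s, w i * f i :=
  calc s.inf' hs f = ∑ i ∈ s, w i * s.inf' hs f := by rw [← sum_mul, hw1, one_mul]
    _ ≤ ∑ i ∈ s, w i * f i :=
      sum_le_sum fun i hi => mul_le_mul_of_nonneg_left (inf'_le f hi) (hw i hi)

section GLDPC

variable {N : ℕ} {J : Type*} (Nbr : J → Finset (Fin N)) (C : J → Finset (Fin N → Bool))

def IsPrimalFeasible (c : Fin N → ℝ) (w : J → (Fin N → Bool) → ℝ) : Prop :=
  (∀ j g, 0 ≤ w j g) ∧ (∀ j, ∑ g ∈ C j, w j g = 1) ∧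
    ∀ j, ∀ i ∈ Nbr j, c i = ∑ g ∈ (C j).filter (fun g => g i = true), w j g

def primalValues (γ : Fin N → ℝ) : Set ℝ :=
  {x | ∃ (c : Fin N → ℝ) (w : J → (Fin N → Bool) → ℝ),
    (∀ j g, 0 ≤ w j g) ∧ (∀ j, ∑ g ∈ C j, w j g = 1) ∧
    (∀ j, ∀ i ∈ Nbr j, c i = ∑ g ∈ (C j).filter (fun g => g i = true), w j g) ∧
    x = ∑ i, γ i * c i}

variable {Nbr C}

theorem mem_primalValues {γ : Fin N → ℝ} {x : ℝ} :
    x ∈ primalValues Nbr C γ ↔ ∃ c w, IsPrimalFeasible Nbr C c w ∧ x = ∑ i, γ i * c i := by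
  simp only [primalValues, IsPrimalFeasible, Set.mem_ofPred_eq, and_assoc]

theorem isClosed_setOf_isPrimalFeasible {X : Type*} [TopologicalSpace X] {c : X → Fin N → ℝ}
    {w : X → J → (Fin N → Bool) → ℝ} (hc : Continuous c) (hw : Continuous w) :
    IsClosed {x | IsPrimalFeasible Nbr C (c x) (w x)} := by
  simp only [IsPrimalFeasible, Set.ofPred_and, Set.ofPred_forall]
  exact .inter (isClosed_iInter fun j => isClosed_iInter fun g => isClosed_le continuous_const
      (by fun_prop))
    (.inter (isClosed_iInter fun j => isClosed_eq (by fun_prop) continuous_const)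
      (isClosed_iInter fun j => isClosed_iInter fun i => isClosed_iInter fun _ =>
        isClosed_eq (by fun_prop) (by fun_prop)))

namespace IsPrimalFeasible

variable {c : Fin N → ℝ} {w : J → (Fin N → Bool) → ℝ}

theorem le_one (h : IsPrimalFeasible Nbr C c w) {j : J} {g : Fin N → Bool} (hg : g ∈ C j) :
    w j g ≤ 1 :=
  h.2.1 j ▸ single_le_sum (fun g _ => h.1 j g) hg

theorem restrict (h : IsPrimalFeasible Nbr C c w) :
    IsPrimalFeasible Nbr C c fun j g => if g ∈ C j then w j g else 0 := by
  refine ⟨fun j g => ?_, fun j => ?_, fun j i hi => ?_⟩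
  · dsimp only
    split_ifs
    exacts [h.1 j g, le_rfl]
  · rw [← h.2.1 j]
    exact sum_congr rfl fun g hg => if_pos hg
  · rw [h.2.2 j i hi]
    exact sum_congr rfl fun g hg => (if_pos (mem_filter.1 hg).1).symm

theorem sum_mul_sum_eq (h : IsPrimalFeasible Nbr C c w) (j : J) (a : Fin N → ℝ) :
    ∑ g ∈ C j, w j g * ∑ i ∈ Nbr j, a i * (if g i = true then 1 else 0) =
      ∑ i ∈ Nbr j, a i * c i := by
  simp_rw [mul_sum]
  rw [sum_comm]
  refine sum_congr rfl fun i hi => ?_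
  rw [h.2.2 j i hi, mul_sum, sum_filter]
  exact sum_congr rfl fun g _ => by split_ifs <;> ring

end IsPrimalFeasible

theorem exists_isLeast_primalValues (hcover : ∀ i : Fin N, ∃ j, i ∈ Nbr j) (γ : Fin N → ℝ)
    (hfeas : ∃ c w, IsPrimalFeasible Nbr C c w) : ∃ p, IsLeast (primalValues Nbr C γ) p := by
  choose j₀ hj₀ using hcover
  -- every variable node is covered, so `c` is determined by `w`
  let c : (J → (Fin N → Bool) → ℝ) → Fin N → ℝ := fun w i =>
    ∑ g ∈ (C (j₀ i)).filter (fun g => g i = true), w (j₀ i) g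
  let K := (Set.univ.pi fun _ => Set.univ.pi fun _ => Set.Icc (0 : ℝ) 1) ∩
    {w | IsPrimalFeasible Nbr C (c w) w}
  have hK : IsCompact K :=
    (isCompact_univ_pi fun _ => isCompact_univ_pi fun _ => isCompact_Icc).inter_right
      (isClosed_setOf_isPrimalFeasible (by fun_prop) continuous_id)
  have hvalues : primalValues Nbr C γ = (fun w => ∑ i, γ i * c w i) '' K := by
    ext x
    rw [mem_primalValues]
    constructor
    · rintro ⟨c', w, hw, rfl⟩
      have hc' : c (fun j g => if g ∈ C j then w j g else 0) = c' := funext fun i =>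
        (hw.restrict.2.2 _ i (hj₀ i)).symm
      refine ⟨_, ⟨Set.mem_univ_pi.2 fun j => Set.mem_univ_pi.2 fun g => ?_, hc' ▸ hw.restrict⟩,
        by beta_reduce; rw [hc']⟩
      split_ifs with hg
      exacts [⟨hw.1 j g, hw.le_one hg⟩, ⟨le_rfl, zero_le_one⟩]
    · rintro ⟨w, hw, rfl⟩
      exact ⟨c w, w, hw.2, rfl⟩
  obtain ⟨c₀, w₀, hw₀⟩ := hfeas
  have hne : (primalValues Nbr C γ).Nonempty := ⟨_, mem_primalValues.2 ⟨c₀, w₀, hw₀, rfl⟩⟩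
  rw [hvalues] at hne ⊢
  exact (hK.image (by fun_prop)).exists_isLeast hne

variable (Nbr C) [Fintype J]

def IsDualFeasible (γ : Fin N → ℝ) (u : Fin N → J → ℝ) : Prop :=
  ∀ i, ∑ j ∈ univ.filter (fun j => i ∈ Nbr j), u i j = γ i

def dualObjective (hCne : ∀ j, (C j).Nonempty) (u : Fin N → J → ℝ) : ℝ :=
  ∑ j, (C j).inf' (hCne j) fun g => ∑ i ∈ Nbr j, u i j * (if g i = true then 1 else 0)

/-- Columns are the dual unknowns `u i j` (`.inl (i, j)`) and lower bounds `m j` (`.inr j`) for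
the `j`-th minimum of the dual objective. -/
def dualInequalityMatrix [DecidableEq J] :
    Matrix ((J × (Fin N → Bool)) ⊕ Unit) ((Fin N × J) ⊕ J) ℝ :=
  of fun r t => match r, t with
  | .inl (j, g), .inl (i, j') => if j = j' ∧ g ∈ C j ∧ i ∈ Nbr j ∧ g i = true then 1 else 0
  | .inl (j, g), .inr j' => if j = j' ∧ g ∈ C j then -1 else 0
  | .inr _, .inl _ => 0
  | .inr _, .inr _ => 1

def dualEqualityMatrix : Matrix (Fin N) ((Fin N × J) ⊕ J) ℝ :=
  of fun i t => match t with
  | .inl (i', j) => if i' = i ∧ i ∈ Nbr j then 1 else 0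
  | .inr _ => 0

variable {Nbr C}

theorem dualObjective_le (hCne : ∀ j, (C j).Nonempty) {γ c : Fin N → ℝ}
    {w : J → (Fin N → Bool) → ℝ} (hw : IsPrimalFeasible Nbr C c w) {u : Fin N → J → ℝ}
    (hu : IsDualFeasible Nbr γ u) : dualObjective Nbr C hCne u ≤ ∑ i, γ i * c i :=
  calc dualObjective Nbr C hCne u ≤ ∑ j, ∑ i ∈ Nbr j, u i j * c i := sum_le_sum fun j _ => by
        rw [← hw.sum_mul_sum_eq]
        exact inf'_le_sum_mul _ _ (fun g _ => hw.1 j g) (hw.2.1 j)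
    _ = ∑ i, ∑ j ∈ univ.filter (fun j => i ∈ Nbr j), u i j * c i :=
        sum_comm' fun j i => by simp
    _ = ∑ i, γ i * c i := sum_congr rfl fun i _ => by rw [← sum_mul, hu i]

section DualSystem

variable [DecidableEq J]

theorem dualInequalityMatrix_mulVec_inl (y : (Fin N × J) ⊕ J → ℝ) {j : J} {g : Fin N → Bool}
    (hg : g ∈ C j) :
    (dualInequalityMatrix Nbr C *ᵥ y) (.inl (j, g)) =
      ∑ i ∈ Nbr j, y (.inl (i, j)) * (if g i = true then 1 else 0) - y (.inr j) := by
  simp [dualInequalityMatrix, mulVec, dotProduct, Fintype.sum_prod_type, hg, ite_and,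
    sub_eq_add_neg]

theorem dualInequalityMatrix_mulVec_inr (y : (Fin N × J) ⊕ J → ℝ) :
    (dualInequalityMatrix Nbr C *ᵥ y) (.inr ()) = ∑ j, y (.inr j) := by
  simp [dualInequalityMatrix, mulVec, dotProduct]

omit [DecidableEq J] in
theorem dualEqualityMatrix_mulVec (y : (Fin N × J) ⊕ J → ℝ) (i : Fin N) :
    (dualEqualityMatrix Nbr *ᵥ y) i = ∑ j ∈ univ.filter (fun j => i ∈ Nbr j), y (.inl (i, j)) := by
  simp [dualEqualityMatrix, mulVec, dotProduct, Fintype.sum_prod_type, ite_and, sum_filter]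

theorem vecMul_dualInequalityMatrix_add_inl (z : (J × (Fin N → Bool)) ⊕ Unit → ℝ)
    (x : Fin N → ℝ) {i : Fin N} {j : J} (hi : i ∈ Nbr j) :
    (z ᵥ* dualInequalityMatrix Nbr C + x ᵥ* dualEqualityMatrix Nbr) (.inl (i, j)) =
      ∑ g ∈ (C j).filter (fun g => g i = true), z (.inl (j, g)) + x i := by
  simp [dualInequalityMatrix, dualEqualityMatrix, vecMul, dotProduct, Fintype.sum_prod_type, hi,
    ite_and, sum_filter]

theorem vecMul_dualInequalityMatrix_add_inr (z : (J × (Fin N → Bool)) ⊕ Unit → ℝ)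
    (x : Fin N → ℝ) (j : J) :
    (z ᵥ* dualInequalityMatrix Nbr C + x ᵥ* dualEqualityMatrix Nbr) (.inr j) =
      z (.inr ()) - ∑ g ∈ C j, z (.inl (j, g)) := by
  simp [dualInequalityMatrix, dualEqualityMatrix, vecMul, dotProduct, Fintype.sum_prod_type,
    ite_and, sum_ite_irrel, neg_add_eq_sub]

theorem exists_isPrimalFeasible_lt_of_certificate (hcover : ∀ i : Fin N, ∃ j, i ∈ Nbr j)
    {γ : Fin N → ℝ} {p : ℝ} {z : (J × (Fin N → Bool)) ⊕ Unit → ℝ} {x : Fin N → ℝ} (hz : 0 ≤ z)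
    (hzx : z ᵥ* dualInequalityMatrix Nbr C + x ᵥ* dualEqualityMatrix Nbr = 0)
    (hpos : 0 < z ⬝ᵥ Sum.elim 0 (fun _ => p) + x ⬝ᵥ γ) :
    ∃ c w, IsPrimalFeasible Nbr C c w ∧ ∑ i, γ i * c i < p := by
  set s := z (.inr ())
  have hweight (j : J) : ∑ g ∈ C j, z (.inl (j, g)) = s := by
    have := congr_fun hzx (.inr j)
    rw [vecMul_dualInequalityMatrix_add_inr, Pi.zero_apply, sub_eq_zero] at this
    exact this.symm
  have hcode (i : Fin N) (j : J) (hi : i ∈ Nbr j) :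
      ∑ g ∈ (C j).filter (fun g => g i = true), z (.inl (j, g)) = -x i := by
    have := congr_fun hzx (.inl (i, j))
    rw [vecMul_dualInequalityMatrix_add_inl z x hi] at this
    simpa [eq_neg_iff_add_eq_zero] using this
  have hval : 0 < s * p + x ⬝ᵥ γ := by
    simpa [dotProduct, Fintype.sum_sum_type, s, mul_comm] using hpos
  rcases (show 0 ≤ s from hz _).eq_or_lt with hs | hs
  · have hx : x = 0 := funext fun i => by
      obtain ⟨j, hj⟩ := hcover i
      rw [Pi.zero_apply, ← neg_eq_zero, ← hcode i j hj]
      have hzero := (sum_eq_zero_iff_of_nonneg fun g _ => hz (.inl (j, g))).1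
        ((hweight j).trans hs.symm)
      exact sum_eq_zero fun g hg => hzero g (mem_filter.1 hg).1
    simp [← hs, hx] at hval
  refine ⟨fun i => -x i / s, fun j g => z (.inl (j, g)) / s,
    ⟨fun j g => div_nonneg (hz _) hs.le, fun j => by rw [← sum_div, hweight, div_self hs.ne'],
      fun j i hi => by rw [← sum_div, hcode i j hi]⟩, ?_⟩
  have hobj : ∑ i, γ i * (-x i / s) = -(x ⬝ᵥ γ) / s := by
    simp [dotProduct, neg_div, sum_div, mul_div_assoc', mul_comm]
  rw [hobj, div_lt_iff₀ hs]
  linarith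

end DualSystem

theorem exists_isDualFeasible_le_dualObjective (hCne : ∀ j, (C j).Nonempty)
    (hcover : ∀ i : Fin N, ∃ j, i ∈ Nbr j) {γ : Fin N → ℝ} {p : ℝ}
    (hp : ∀ c w, IsPrimalFeasible Nbr C c w → p ≤ ∑ i, γ i * c i) :
    ∃ u, IsDualFeasible Nbr γ u ∧ p ≤ dualObjective Nbr C hCne u := by
  classical
  rcases farkas_le_eq (dualInequalityMatrix Nbr C) (Sum.elim 0 fun _ => p)
      (dualEqualityMatrix Nbr) γ with ⟨y, hyA, hyB⟩ | ⟨z, x, hz, hzx, hpos⟩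
  · refine ⟨fun i j => y (.inl (i, j)),
      fun i => (dualEqualityMatrix_mulVec y i).symm.trans (congr_fun hyB i), ?_⟩
    calc p ≤ ∑ j, y (.inr j) := by simpa [dualInequalityMatrix_mulVec_inr] using hyA (.inr ())
      _ ≤ dualObjective Nbr C hCne _ := sum_le_sum fun j _ => le_inf' _ _ fun g hg => by
          have := hyA (.inl (j, g))
          rw [dualInequalityMatrix_mulVec_inl y hg] at this
          simpa using this
  obtain ⟨c, w, hw, hlt⟩ := exists_isPrimalFeasible_lt_of_certificate hcover hz hzx hpos
  exact absurd (hp c w hw) hlt.not_ge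

end GLDPC

/-- strong LP duality between Problem-P and Problem-D for a GLDPC
code with variable nodes `Fin N`, constraint nodes `J`, neighborhoods `Nbr j` and
nonempty constituent codes `C j`.  Assuming every variable node has a constraint
neighbor and Problem-P is feasible, the minimum of `∑ γ i * c i` over the
fundamental polytope (Problem-P) exists, the maximum of
`D(u) = ∑_j min_{g ∈ C j} ∑_{i ∈ N_j} u i j * g i` over the dual-feasible `u`
(Problem-D) exists, and the two are equal. -/
theorem problemP_problemD_strong_duality
    {N : ℕ} {J : Type} [Fintype J]
    (Nbr : J → Finset (Fin N)) (C : J → Finset (Fin N → Bool))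
    (hCne : ∀ j, (C j).Nonempty)
    (hcover : ∀ i : Fin N, ∃ j, i ∈ Nbr j)
    (γ : Fin N → ℝ)
    (hfeas : ∃ (c : Fin N → ℝ) (w : J → (Fin N → Bool) → ℝ),
      (∀ j g, 0 ≤ w j g) ∧ (∀ j, ∑ g ∈ C j, w j g = 1) ∧
      (∀ j, ∀ i ∈ Nbr j, c i = ∑ g ∈ (C j).filter (fun g => g i = true), w j g)) :
    ∃ p : ℝ,
      IsLeast {x : ℝ | ∃ (c : Fin N → ℝ) (w : J → (Fin N → Bool) → ℝ),
          (∀ j g, 0 ≤ w j g) ∧ (∀ j, ∑ g ∈ C j, w j g = 1) ∧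
          (∀ j, ∀ i ∈ Nbr j, c i = ∑ g ∈ (C j).filter (fun g => g i = true), w j g) ∧
          x = ∑ i, γ i * c i} p ∧
      IsGreatest {x : ℝ | ∃ u : Fin N → J → ℝ,
          (∀ i, ∑ j ∈ Finset.univ.filter (fun j => i ∈ Nbr j), u i j = γ i) ∧
          x = ∑ j, (C j).inf' (hCne j)
              (fun g => ∑ i ∈ Nbr j, u i j * (if g i = true then 1 else 0))} p := by
  obtain ⟨p, hp⟩ := exists_isLeast_primalValues hcover γ hfeas
  obtain ⟨c, w, hw, rfl⟩ := mem_primalValues.1 hp.1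
  obtain ⟨u, hu, hle⟩ := exists_isDualFeasible_le_dualObjective hCne hcover fun c' w' hw' =>
    hp.2 (mem_primalValues.2 ⟨c', w', hw', rfl⟩)
  refine ⟨_, hp, ⟨u, hu, (le_antisymm (dualObjective_le hCne hw hu) hle).symm⟩, ?_⟩
  rintro _ ⟨u', hu', rfl⟩
  exact dualObjective_le hCne hw hu'
end

section
/- For a single parity check code C_j = {g ∈ {0,1}^{N_j} : Σ_i g_i even}, a vector c lies in the convex hull of C_j if and only if 0 ≤ c_i ≤ 1 for all i ∈ N_j and, for every odd-sized subset S ⊆ N_j, Σ_{i∈N_j∖S} c_i + Σ_{i∈S}(1−c_i) ≥ 1. -/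
/-! The inequalities say that `c` lies in the unit cube at `ℓ¹`-distance at least `1` from every
odd vertex `1_T`; since an even code word differs from an odd vertex in some coordinate of `S`,
every convex combination of code words satisfies them.

Conversely, induct on the number of fractional coordinates of `c`. An integral point of the
polytope is an even code word. If an odd-set inequality is tight, `c` is an explicit convex
combination of the even neighbours of `1_T`. Otherwise, moving a fractional coordinate of `c` up
and down until it becomes integral or an odd-set inequality becomes tight writes `c` as a convex
combination of two points covered by the previous cases. -/

open Finset Function
open scoped symmDiff

lemma Convex.mem_of_update_mem {ι : Type*} [DecidableEq ι] {s : Set (ι → ℝ)} (hs : Convex ℝ s)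
    {c : ι → ℝ} {i : ι} {x y : ℝ} (hx : update c i x ∈ s) (hy : update c i y ∈ s)
    (hxc : x ≤ c i) (hcy : c i ≤ y) : c ∈ s := by
  obtain ⟨a, b, ha, hb, hab, hci⟩ : c i ∈ segment ℝ x y := by
    rw [segment_eq_Icc (hxc.trans hcy)]; exact ⟨hxc, hcy⟩
  convert hs hx hy ha hb hab using 1
  ext j
  rcases eq_or_ne j i with rfl | hj
  · simpa using hci.symm
  · simp [update_of_ne hj, ← add_mul, hab]

lemma exists_pos_le_one_forall_nonneg {ι : Type*} [DecidableEq ι] (s : Finset ι) (a b : ι → ℝ)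
    (ha : ∀ j ∈ s, 0 < a j) :
    ∃ l : ℝ, 0 < l ∧ l ≤ 1 ∧ (∀ j ∈ s, 0 ≤ a j + l * b j) ∧
      (l = 1 ∨ ∃ j ∈ s, a j + l * b j = 0) := by
  induction s using Finset.induction_on with
  | empty => exact ⟨1, one_pos, le_rfl, by simp, .inl rfl⟩
  | insert j s hj ih =>
    obtain ⟨l, hl0, hl1, hnonneg, hstop⟩ := ih fun k hk => ha k (mem_insert_of_mem hk)
    have haj := ha j (mem_insert_self j s)
    by_cases hlj : 0 ≤ a j + l * b j
    · refine ⟨l, hl0, hl1, forall_mem_insert _ _ _ |>.2 ⟨hlj, hnonneg⟩, ?_⟩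
      exact hstop.imp_right fun ⟨k, hk, h⟩ => ⟨k, mem_insert_of_mem hk, h⟩
    -- otherwise stop earlier, where the `j`-th function vanishes
    have hbj : b j < 0 := by nlinarith
    set l' := a j / -b j
    have hl' : l' * -b j = a j := div_mul_cancel₀ _ (by linarith)
    have hl'l : l' < l := by nlinarith
    refine ⟨l', div_pos haj (by linarith), by linarith,
      forall_mem_insert _ _ _ |>.2 ⟨by linarith, fun k hk => ?_⟩,
      .inr ⟨j, mem_insert_self j s, by linarith⟩⟩
    have := hnonneg k hk
    rcases le_or_gt 0 (b k) with hbk | hbk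
    · nlinarith [ha k (mem_insert_of_mem hk)]
    · nlinarith

lemma card_filter_update_lt {α β : Type*} [DecidableEq α] {s : Finset α} {f : α → β}
    {p : β → Prop} [DecidablePred p] {i : α} {b : β} (hi : i ∈ s) (hfi : p (f i)) (hb : ¬p b) :
    #(s.filter fun j => p (update f i b j)) < #(s.filter fun j => p (f j)) := by
  refine card_lt_card <|
    (ssubset_iff_of_subset fun j hj => ?_).2 ⟨i, by simp [hi, hfi], by simp [hb]⟩
  rw [mem_filter] at hj ⊢
  rcases eq_or_ne j i with rfl | hji
  · simp [hb] at hj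
  · simpa [update_of_ne hji] using hj

section InLocal

variable {N : ℕ} {S : Finset (Fin N)} {C : Set (Fin N → Bool)} {c c' : Fin N → ℝ}

lemma inLocal.congr (h : inLocal S C c) (hcc' : ∀ i ∈ S, c i = c' i) : inLocal S C c' := by
  obtain ⟨w, hw0, hwC, hw1, hwc⟩ := h
  exact ⟨w, hw0, hwC, hw1, fun i hi => (hcc' i hi).symm.trans (hwc i hi)⟩

lemma inLocal_of_mem {g : Fin N → Bool} (hg : g ∈ C) :
    inLocal S C (fun i => if g i = true then 1 else 0) := by
  refine ⟨fun g' => if g' = g then 1 else 0, fun g' => by dsimp only; split_ifs <;> norm_num,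
    fun g' hg' => if_neg (by rintro rfl; exact hg' hg), by simp, fun i _ => ?_⟩
  rw [sum_eq_single g (fun g' _ hg' => by simp [hg']) (by simp)]
  simp

lemma convex_setOf_inLocal : Convex ℝ {c | inLocal S C c} := by
  rintro c ⟨w, hw0, hwC, hw1, hwc⟩ c' ⟨w', hw0', hwC', hw1', hwc'⟩ a b ha hb hab
  refine ⟨a • w + b • w', fun g => ?_, fun g hg => ?_, ?_, fun i hi => ?_⟩
  · have := hw0 g; have := hw0' g
    simp only [Pi.add_apply, Pi.smul_apply, smul_eq_mul]
    positivity
  · simp [hwC g hg, hwC' g hg]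
  · simp [sum_add_distrib, ← mul_sum, hw1, hw1', hab]
  · simp only [Pi.add_apply, Pi.smul_apply, smul_eq_mul, hwc i hi, hwc' i hi, mul_sum,
      ← sum_add_distrib]
    exact sum_congr rfl fun g _ => by split_ifs <;> ring

end InLocal

section Parity

variable {N : ℕ}

def parityCode (S : Finset (Fin N)) : Set (Fin N → Bool) :=
  {g | Even #(S.filter fun i => g i = true)}

/-- For `c` in the unit cube and `T ⊆ S`, this is the `ℓ¹`-distance on `S` from `c` to the
indicator vector of `T`. -/
def distIndicator (S T : Finset (Fin N)) (c : Fin N → ℝ) : ℝ :=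
  ∑ i ∈ S \ T, c i + ∑ i ∈ T, (1 - c i)

def InParityPolytope (S : Finset (Fin N)) (c : Fin N → ℝ) : Prop :=
  (∀ i ∈ S, 0 ≤ c i ∧ c i ≤ 1) ∧ ∀ T ⊆ S, Odd #T → 1 ≤ distIndicator S T c

variable {S T U : Finset (Fin N)} {c : Fin N → ℝ} {i : Fin N}

lemma distIndicator_eq_sum (hTS : T ⊆ S) :
    distIndicator S T c = ∑ i ∈ S, if i ∈ T then 1 - c i else c i := by
  rw [sum_ite, filter_mem_eq_inter, inter_eq_right.2 hTS, filter_notMem_eq_sdiff, add_comm]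
  rfl

lemma distIndicator_update (hi : i ∈ S) (hTS : T ⊆ S) (x : ℝ) :
    distIndicator S T (update c i x) =
      distIndicator S T c + if i ∈ T then c i - x else x - c i := by
  rw [distIndicator_eq_sum hTS, distIndicator_eq_sum hTS, ← add_sum_erase _ _ hi,
    ← add_sum_erase _ _ hi, sum_congr rfl fun j hj => by rw [update_of_ne (ne_of_mem_erase hj)]]
  split_ifs <;> simp <;> ring

lemma exists_ne_of_mem_parityCode {g : Fin N → Bool} (hg : g ∈ parityCode S) (hTS : T ⊆ S)
    (hT : Odd #T) : ∃ i ∈ S, g i ≠ decide (i ∈ T) := by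
  by_contra! h
  have hgT : (S.filter fun i => g i = true) = T := by
    ext i
    constructor
    · intro hi
      rw [mem_filter] at hi
      simpa [h i hi.1] using hi.2
    · intro hi
      simp [hTS hi, h i (hTS hi), hi]
  exact Nat.not_even_iff_odd.2 hT (hgT ▸ hg)

lemma inParityPolytope_of_inLocal (h : inLocal S (parityCode S) c) : InParityPolytope S c := by
  obtain ⟨w, hw0, hwC, hw1, hwc⟩ := h
  have hterm_nonneg : ∀ (p : Prop) [Decidable p] g, 0 ≤ if p then w g else 0 := fun p _ g => by
    split_ifs
    exacts [hw0 g, le_rfl]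
  refine ⟨fun i hi => ⟨?_, ?_⟩, fun T hTS hT => ?_⟩
  · rw [hwc i hi]
    exact sum_nonneg fun g _ => hterm_nonneg _ g
  · rw [hwc i hi, ← hw1]
    exact sum_le_sum fun g _ => by split_ifs <;> simp [hw0 g]
  have hdist : ∀ i ∈ S,
      (if i ∈ T then 1 - c i else c i) = ∑ g, if g i ≠ decide (i ∈ T) then w g else 0 := by
    intro i hi
    by_cases hiT : i ∈ T
    · simp only [hiT, if_true, hwc i hi, ← hw1, ← sum_sub_distrib]
      exact sum_congr rfl fun g _ => by cases g i <;> simp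
    · simp [hiT, hwc i hi]
  rw [distIndicator_eq_sum hTS, sum_congr rfl hdist, sum_comm, ← hw1]
  refine sum_le_sum fun g _ => ?_
  by_cases hg : g ∈ parityCode S
  · obtain ⟨i, hi, hgi⟩ := exists_ne_of_mem_parityCode hg hTS hT
    calc w g = if g i ≠ decide (i ∈ T) then w g else 0 := (if_pos hgi).symm
      _ ≤ _ := single_le_sum (f := fun j => if g j ≠ decide (j ∈ T) then w g else 0)
          (fun j _ => hterm_nonneg _ g) hi
  · simp [hwC g hg]

lemma inLocal_indicator_of_even (hUS : U ⊆ S) (hU : Even #U) :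
    inLocal S (parityCode S) (fun i => if i ∈ U then 1 else 0) := by
  have hfilter : (S.filter fun i => i ∈ U) = U := by
    rw [filter_mem_eq_inter, inter_eq_right.2 hUS]
  refine (inLocal_of_mem (g := fun i => decide (i ∈ U)) ?_).congr fun i _ => by simp
  simpa [parityCode, hfilter] using hU

lemma inLocal_of_integral (hc : InParityPolytope S c) (hint : ∀ i ∈ S, c i = 0 ∨ c i = 1) :
    inLocal S (parityCode S) c := by
  set U := S.filter fun i => c i = 1
  have hU : Even #U := by
    by_contra hodd
    have hdist := hc.2 U (filter_subset _ _) (Nat.not_even_iff_odd.1 hodd)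
    have hzero : ∑ i ∈ S, (if i ∈ U then 1 - c i else c i) = 0 :=
      sum_eq_zero fun i hi => by rcases hint i hi with h | h <;> simp [U, hi, h]
    rw [distIndicator_eq_sum (filter_subset _ _), hzero] at hdist
    norm_num at hdist
  refine (inLocal_indicator_of_even (filter_subset _ _) hU).congr fun i hi => ?_
  rcases hint i hi with h | h <;> simp [hi, h]

lemma even_card_symmDiff_singleton (hT : Odd #T) (i : Fin N) : Even #(T ∆ {i}) := by
  by_cases hi : i ∈ T
  · have : T ∆ {i} = T.erase i := by
      ext j; by_cases j = i <;> simp_all [mem_symmDiff]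
    rw [this, card_erase_of_mem hi]
    exact Nat.Odd.sub_odd hT odd_one
  · have : T ∆ {i} = insert i T := by
      ext j; by_cases j = i <;> simp_all [mem_symmDiff]
    rw [this, card_insert_of_notMem hi]
    exact hT.add_one

/-- On a tight odd-set face, `c` is the convex combination with weights `|c i - 1_T(i)|` of the
even vertices obtained from the indicator of `T` by flipping one coordinate. -/
lemma inLocal_of_distIndicator_eq_one (hbox : ∀ i ∈ S, 0 ≤ c i ∧ c i ≤ 1) (hTS : T ⊆ S)
    (hT : Odd #T) (htight : distIndicator S T c = 1) : inLocal S (parityCode S) c := by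
  set t : Fin N → ℝ := fun i => if i ∈ T then 1 - c i else c i
  have ht0 : ∀ i ∈ S, 0 ≤ t i := fun i hi => by
    have := hbox i hi
    simp only [t]
    split_ifs <;> linarith
  have ht1 : ∑ i ∈ S, t i = 1 := (distIndicator_eq_sum hTS).symm.trans htight
  have hvert : ∀ i ∈ S,
      (fun k => if k ∈ T ∆ {i} then (1 : ℝ) else 0) ∈ {c | inLocal S (parityCode S) c} :=
    fun i hi => inLocal_indicator_of_even
      (symmDiff_subset_union.trans (union_subset hTS (singleton_subset_iff.2 hi)))
      (even_card_symmDiff_singleton hT i)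
  refine (convex_setOf_inLocal.sum_mem ht0 ht1 hvert).congr fun k hk => ?_
  have hoff : ∀ i ∈ S.erase k,
      t i * (if k ∈ T ∆ {i} then 1 else 0) = t i * if k ∈ T then 1 else 0 :=
    fun i hi => by simp [mem_symmDiff, (ne_of_mem_erase hi).symm]
  simp only [Finset.sum_apply, Pi.smul_apply, smul_eq_mul]
  rw [← add_sum_erase _ _ hk, sum_congr rfl hoff, ← sum_mul, sum_erase_eq_sub hk, ht1]
  by_cases hkT : k ∈ T <;> simp [t, hkT, mem_symmDiff]

lemma exists_update_inParityPolytope (hc : InParityPolytope S c) (hi : i ∈ S)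
    (hslack : ∀ T ⊆ S, Odd #T → 1 < distIndicator S T c) {t : ℝ} (ht0 : 0 ≤ t) (ht1 : t ≤ 1) :
    ∃ l : ℝ, 0 < l ∧ l ≤ 1 ∧ InParityPolytope S (update c i (c i + l * (t - c i))) ∧
      (l = 1 ∨ ∃ T ⊆ S, Odd #T ∧ distIndicator S T (update c i (c i + l * (t - c i))) = 1) := by
  have hdist : ∀ l, ∀ T ⊆ S, distIndicator S T (update c i (c i + l * (t - c i))) =
      distIndicator S T c - 1 + l * (if i ∈ T then c i - t else t - c i) + 1 := by
    intro l T hTS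
    rw [distIndicator_update hi hTS]
    split_ifs <;> ring
  obtain ⟨l, hl0, hl1, hnonneg, hstop⟩ := exists_pos_le_one_forall_nonneg
    (S.powerset.filter fun T => Odd #T) (fun T => distIndicator S T c - 1)
    (fun T => if i ∈ T then c i - t else t - c i)
    (fun T hT => by
      rw [mem_filter, mem_powerset] at hT
      linarith [hslack T hT.1 hT.2])
  refine ⟨l, hl0, hl1, ⟨fun j hj => ?_, fun T hTS hT => ?_⟩,
    hstop.imp_right fun ⟨T, hT, h⟩ => ?_⟩
  · have := hc.1 j hj
    rcases eq_or_ne j i with rfl | hji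
    · simp only [update_self]
      constructor <;> nlinarith
    · simpa [update_of_ne hji] using this
  · rw [hdist l T hTS]
    linarith [hnonneg T (by simpa using ⟨hTS, hT⟩)]
  · rw [mem_filter, mem_powerset] at hT
    exact ⟨T, hT.1, hT.2, by rw [hdist l T hT.1, h]; ring⟩

theorem inLocal_of_inParityPolytope (hc : InParityPolytope S c) : inLocal S (parityCode S) c := by
  induction hn : #(S.filter fun j => c j ≠ 0 ∧ c j ≠ 1) using Nat.strong_induction_on
    generalizing c with
  | _ n ih =>
  by_cases htight : ∃ T ⊆ S, Odd #T ∧ distIndicator S T c = 1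
  · obtain ⟨T, hTS, hT, h⟩ := htight
    exact inLocal_of_distIndicator_eq_one hc.1 hTS hT h
  push Not at htight
  have hslack : ∀ T ⊆ S, Odd #T → 1 < distIndicator S T c :=
    fun T hTS hT => (hc.2 T hTS hT).lt_of_ne' (htight T hTS hT)
  by_cases hint : ∀ j ∈ S, c j = 0 ∨ c j = 1
  · exact inLocal_of_integral hc hint
  push Not at hint
  obtain ⟨i, hi, hfrac⟩ := hint
  have hmove : ∀ t : ℝ, (t = 0 ∨ t = 1) →
      ∃ l, 0 ≤ l ∧ inLocal S (parityCode S) (update c i (c i + l * (t - c i))) := by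
    intro t ht
    have ht01 : 0 ≤ t ∧ t ≤ 1 := by rcases ht with rfl | rfl <;> norm_num
    obtain ⟨l, hl0, -, hl, hstop⟩ := exists_update_inParityPolytope hc hi hslack ht01.1 ht01.2
    refine ⟨l, hl0.le, ?_⟩
    rcases hstop with rfl | ⟨T, hTS, hT, h⟩
    · rw [one_mul, add_sub_cancel] at hl ⊢
      exact ih _ (hn ▸ card_filter_update_lt (p := fun x => x ≠ 0 ∧ x ≠ 1) hi hfrac
        (by tauto)) hl rfl
    · exact inLocal_of_distIndicator_eq_one hl.1 hTS hT h
  obtain ⟨l₀, hl₀, h₀⟩ := hmove 0 (.inl rfl)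
  obtain ⟨l₁, hl₁, h₁⟩ := hmove 1 (.inr rfl)
  have := hc.1 i hi
  exact convex_setOf_inLocal.mem_of_update_mem h₀ h₁ (by nlinarith) (by nlinarith)

end Parity

/-- parity polytope characterization.  For the single parity check
code on the index set `S` (binary vectors with an even number of ones on `S`), a
vector `c` lies in its convex hull if and only if `0 ≤ c i ≤ 1` for all `i ∈ S`
and `∑_{i ∈ S∖T} c_i + ∑_{i ∈ T}(1 - c_i) ≥ 1` for every odd-sized `T ⊆ S`. -/
theorem parity_polytope_characterization
    {N : ℕ} (S : Finset (Fin N)) (c : Fin N → ℝ) :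
    inLocal S {g : Fin N → Bool | Even ((S.filter (fun i => g i = true)).card)} c ↔
      ((∀ i ∈ S, 0 ≤ c i ∧ c i ≤ 1) ∧
        ∀ T ⊆ S, Odd T.card → 1 ≤ ∑ i ∈ S \ T, c i + ∑ i ∈ T, (1 - c i)) :=
  ⟨inParityPolytope_of_inLocal, inLocal_of_inParityPolytope⟩
end

section
/- The minimum distance lower bound obtained by forcing local codewords is valid: d_min(C) ≥ min over check nodes r and nonzero local codewords c_r ∈ C_r of (the minimum of Σ_i c_i over all c ∈ Q(C) with c_i = c_{r,i} for i ∈ N_r), where d_min(C) is the minimum Hamming weight of a nonzero codeword, provided every nonzero codeword of C has a nonzero local codeword on at least one check node. -/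
/-! A codeword is a vertex of the fundamental polytope that agrees with itself on every
neighbourhood, so the LP bound for a check node where it is nonzero is at most its weight. -/

namespace ForcedLocalCodeword

variable {N : ℕ} {J : Type}

def toRealVec (g : Fin N → Bool) : Fin N → ℝ := fun i => if g i = true then 1 else 0

theorem sum_toRealVec (g : Fin N → Bool) :
    ∑ i, toRealVec g i = ((Finset.univ.filter (fun i => g i = true)).card : ℝ) := by
  simp [toRealVec, Finset.sum_boole]

/-- The point mass at `g` is the convex combination witnessing membership. -/
theorem inLocal_toRealVec {S : Finset (Fin N)} {C : Set (Fin N → Bool)} {g : Fin N → Bool}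
    (hg : g ∈ C) : inLocal S C (toRealVec g) := by
  refine ⟨fun h => if h = g then 1 else 0, fun h => ?_, fun h hh => ?_, by simp, fun i _ => ?_⟩
  · positivity
  · exact if_neg fun (heq : h = g) => hh (heq ▸ hg)
  · rw [Finset.sum_eq_single g (fun h _ hne => by simp [hne]) (by simp)]
    simp [toRealVec]

def fundamentalPolytope (Nbr : J → Finset (Fin N)) (Cloc : J → Set (Fin N → Bool)) :
    Set (Fin N → ℝ) :=
  {c | (∀ i, 0 ≤ c i ∧ c i ≤ 1) ∧ ∀ j, inLocal (Nbr j) (Cloc j) c}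

theorem toRealVec_mem_fundamentalPolytope {Nbr : J → Finset (Fin N)}
    {Cloc : J → Set (Fin N → Bool)} {g : Fin N → Bool} (hg : ∀ j, g ∈ Cloc j) :
    toRealVec g ∈ fundamentalPolytope Nbr Cloc :=
  ⟨fun i => by unfold toRealVec; split <;> norm_num, fun j => inLocal_toRealVec (hg j)⟩

noncomputable def forcedWeight (Nbr : J → Finset (Fin N)) (Cloc : J → Set (Fin N → Bool))
    (r : J) (σ : Fin N → Bool) : ℝ :=
  sInf {y : ℝ | ∃ c ∈ fundamentalPolytope Nbr Cloc,
    (∀ i ∈ Nbr r, c i = toRealVec σ i) ∧ y = ∑ i, c i}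

variable {Nbr : J → Finset (Fin N)} {Cloc : J → Set (Fin N → Bool)}

theorem forcedWeight_nonneg (r : J) (σ : Fin N → Bool) : 0 ≤ forcedWeight Nbr Cloc r σ := by
  refine Real.sInf_nonneg ?_
  rintro y ⟨c, ⟨hc, _⟩, _, rfl⟩
  exact Finset.sum_nonneg fun i _ => (hc i).1

theorem forcedWeight_le_weight {g : Fin N → Bool} (hg : ∀ j, g ∈ Cloc j) (r : J) :
    forcedWeight Nbr Cloc r g ≤ ((Finset.univ.filter (fun i => g i = true)).card : ℝ) := by
  refine csInf_le ⟨0, ?_⟩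
    ⟨toRealVec g, toRealVec_mem_fundamentalPolytope hg, fun _ _ => rfl, (sum_toRealVec g).symm⟩
  rintro y ⟨c, ⟨hc, _⟩, _, rfl⟩
  exact Finset.sum_nonneg fun i _ => (hc i).1

end ForcedLocalCodeword

open ForcedLocalCodeword in
/-- validity of the minimum-distance lower bound obtained by forcing
local codewords.  For a code given by local codes `Cloc j` on neighborhoods
`Nbr j` (codewords are the `g` lying in every `Cloc j`), provided every nonzero
codeword has a nonzero local codeword on at least one check node, the Hamming
weight of every nonzero codeword is at least the minimum, over check nodes `r`
and nonzero local codewords `σ ∈ Cloc r`, of the minimum `L₁`-weight over the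
points of the fundamental polytope whose coordinates on `N_r` agree with `σ`;
i.e. `d_min(C)` is lower bounded by this minimum. -/
theorem forced_local_codeword_min_distance_bound
    {N : ℕ} {J : Type}
    (Nbr : J → Finset (Fin N)) (Cloc : J → Set (Fin N → Bool))
    (hproviso : ∀ g : Fin N → Bool, (∀ j, g ∈ Cloc j) → g ≠ (fun _ => false) →
      ∃ j, ∃ i ∈ Nbr j, g i = true) :
    ∀ g : Fin N → Bool, (∀ j, g ∈ Cloc j) → g ≠ (fun _ => false) →
      sInf {x : ℝ | ∃ (r : J) (σ : Fin N → Bool), σ ∈ Cloc r ∧ (∃ i ∈ Nbr r, σ i = true) ∧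
          x = sInf {y : ℝ | ∃ c : Fin N → ℝ,
            ((∀ i, 0 ≤ c i ∧ c i ≤ 1) ∧ ∀ j, inLocal (Nbr j) (Cloc j) c) ∧
            (∀ i ∈ Nbr r, c i = (if σ i = true then 1 else 0)) ∧
            y = ∑ i, c i}}
        ≤ ((Finset.univ.filter (fun i => g i = true)).card : ℝ) := by
  intro g hg hgne
  obtain ⟨j, hj⟩ := hproviso g hg hgne
  change sInf {x : ℝ | ∃ (r : J) (σ : Fin N → Bool), σ ∈ Cloc r ∧ (∃ i ∈ Nbr r, σ i = true) ∧
    x = forcedWeight Nbr Cloc r σ} ≤ _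
  calc _ ≤ forcedWeight Nbr Cloc j g := by
        refine csInf_le ⟨0, ?_⟩ ⟨j, g, hg j, hj, rfl⟩
        rintro x ⟨r, σ, -, -, rfl⟩
        exact forcedWeight_nonneg r σ
    _ ≤ _ := forcedWeight_le_weight hg j
end
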